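/- arXiv:math/9905031 — 3 statements merged into one kernel-verified Lean document; each statement's English description precedes it below -/
import Mathlib

section
/- Let G = (L, B) be a finite connected graph with at least two vertices, let β > 0, let q ≥ 2 be an integer, let i ∈ {1,…,q}, and let x, y ∈ L with x ≠ y. If X is distributed according to the Potts Gibbs measure μ^G_{β,q}, then the correlation between the indicator of {X(x)=i} and the indicator of {X(y)=i} is strictly positive: μ^G_{β,q}(X(x)=i and X(y)=i) > 1/q². -/
/-!
Edwards–Sokal coupling: with `p = 1 - e^{-2β}`, the Potts weight of `σ` is the sum over bond
configurations `η` of the Bernoulli(`p`) weight of `η` times the indicator that `σ` is constant on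
the `η`-clusters. For fixed `η`, recolouring the clusters of `x` and `y` by `i` injects each of the
`q²` fibers of `σ ↦ (σ x, σ y)` into the `(i, i)`-fiber, so there are at most `q²` times as
many compatible colourings as compatible colourings with `σ x = σ y = i`. For the all-open
configuration, which has positive weight as `β > 0`, connectivity puts `x` and `y` in one cluster,
so the `(j, i)`-fibers with `j ≠ i` are empty and the inequality becomes strict.
-/

open Finset

noncomputable section

variable {V : Type*}

/-- The spanning subgraph of `G` consisting of the `η`-open edges. -/
def openSub (G : SimpleGraph V) (η : G.edgeSet → Bool) : SimpleGraph V :=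
  SimpleGraph.fromEdgeSet {s : Sym2 V | ∃ h : s ∈ G.edgeSet, η ⟨s, h⟩ = true}

/-- The number of open clusters of `η` (connected components of the spanning
subgraph of open edges, including isolated vertices). -/
def numClusters (G : SimpleGraph V) (η : G.edgeSet → Bool) : ℕ :=
  Nat.card (openSub G η).ConnectedComponent

/-- The factor `p^b (1-p)^(1-b)`. -/
def bWeight (p : ℝ) (b : Bool) : ℝ := if b then p else 1 - p

variable [Fintype V] [DecidableEq V]

/-- Unnormalized random-cluster weight. -/
def rcWeight (G : SimpleGraph V) [Fintype G.edgeSet] (p q : ℝ) (η : G.edgeSet → Bool) : ℝ :=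
  (∏ e : G.edgeSet, bWeight p (η e)) * q ^ numClusters G η

/-- The random-cluster measure `φ^G_{p,q}`. -/
def rcMeasure (G : SimpleGraph V) [Fintype G.edgeSet] (p q : ℝ) (η : G.edgeSet → Bool) : ℝ :=
  rcWeight G p q η / ∑ η' : G.edgeSet → Bool, rcWeight G p q η'

/-- Whether the spin configuration `σ` disagrees across an unordered pair. -/
def disagreeB {k : ℕ} (σ : V → Fin k) : Sym2 V → Bool :=
  Sym2.lift ⟨fun x y => decide (σ x ≠ σ y), fun x y => by simp [ne_comm]⟩

/-- Unnormalized Potts weight `exp(-2β · #{disagreeing edges})`. -/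
def pottsWeight (G : SimpleGraph V) [Fintype G.edgeSet] (β : ℝ) {k : ℕ} (σ : V → Fin k) : ℝ :=
  Real.exp (-2 * β * ∑ e : G.edgeSet, (if disagreeB σ e.val then (1 : ℝ) else 0))

/-- The `k`-state Potts Gibbs measure `μ^G_{β,k}`. -/
def pottsMeasure (G : SimpleGraph V) [Fintype G.edgeSet] (β : ℝ) {k : ℕ} (σ : V → Fin k) : ℝ :=
  pottsWeight G β σ / ∑ σ' : V → Fin k, pottsWeight G β σ'

/-- Unnormalized Edwards–Sokal weight. -/
def esWeight (G : SimpleGraph V) [Fintype G.edgeSet] (p : ℝ) {k : ℕ}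
    (σ : V → Fin k) (η : G.edgeSet → Bool) : ℝ :=
  ∏ e : G.edgeSet,
    bWeight p (η e) * (if η e = true ∧ disagreeB σ e.val = true then 0 else 1)

/-- The Edwards–Sokal measure `P^G_{p,k}`. -/
def esMeasure (G : SimpleGraph V) [Fintype G.edgeSet] (p : ℝ) {k : ℕ}
    (σ : V → Fin k) (η : G.edgeSet → Bool) : ℝ :=
  esWeight G p σ η /
    ∑ ση : (V → Fin k) × (G.edgeSet → Bool), esWeight G p ση.1 ση.2

/-- `σ` is constant on every open cluster of `η`. -/
def ConstOnClusters (G : SimpleGraph V) (η : G.edgeSet → Bool) {k : ℕ} (σ : V → Fin k) : Prop :=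
  ∀ x y : V, (openSub G η).Reachable x y → σ x = σ y

section
omit [Fintype V] [DecidableEq V]

@[simp]
lemma disagreeB_mk {k : ℕ} (σ : V → Fin k) (a b : V) :
    disagreeB σ s(a, b) = decide (σ a ≠ σ b) := rfl

lemma openSub_true (G : SimpleGraph V) : openSub G (fun _ => true) = G := by
  simp [openSub]

lemma constOnClusters_iff (G : SimpleGraph V) (η : G.edgeSet → Bool) {k : ℕ} (σ : V → Fin k) :
    ConstOnClusters G η σ ↔ ∀ e : G.edgeSet, η e = true → disagreeB σ e.val = false := by
  constructor
  · rintro h ⟨e, he⟩ hη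
    induction e using Sym2.ind with
    | _ a b =>
      have hadj : (openSub G η).Adj a b := by
        rw [openSub, SimpleGraph.fromEdgeSet_adj]
        exact ⟨⟨he, hη⟩, (G.mem_edgeSet.mp he).ne⟩
      simp [h a b hadj.reachable]
  · rintro h u v ⟨w⟩
    induction w with
    | nil => rfl
    | @cons a b c hadj _ ih =>
      rw [openSub, SimpleGraph.fromEdgeSet_adj] at hadj
      obtain ⟨⟨he, hη⟩, -⟩ := hadj
      simpa [ih] using h ⟨s(a, b), he⟩ hη

lemma ConstOnClusters.ite {G : SimpleGraph V} {η : G.edgeSet → Bool} {k : ℕ} {σ τ : V → Fin k}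
    (hσ : ConstOnClusters G η σ) (hτ : ConstOnClusters G η τ) {P : V → Prop} [DecidablePred P]
    (hP : ∀ u v, (openSub G η).Reachable u v → (P u ↔ P v)) :
    ConstOnClusters G η (fun v => if P v then τ v else σ v) := by
  intro u v huv
  by_cases hu : P u
  · simp [hu, (hP u v huv).mp hu, hτ u v huv]
  · simp [hu, mt (hP u v huv).mpr hu, hσ u v huv]

lemma prod_ite_disagreeB_eq_ite_constOnClusters (G : SimpleGraph V) [Fintype G.edgeSet] {k : ℕ}
    (σ : V → Fin k) (η : G.edgeSet → Bool) [Decidable (ConstOnClusters G η σ)] :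
    (∏ e : G.edgeSet, (if η e = true ∧ disagreeB σ e.val = true then (0 : ℝ) else 1)) =
      if ConstOnClusters G η σ then 1 else 0 := by
  rw [prod_congr rfl fun e _ => (ite_not _ _ _).symm, prod_ite_zero, prod_const_one]
  refine if_congr ?_ rfl rfl
  simp [constOnClusters_iff]

def bernoulliWeight (G : SimpleGraph V) [Fintype G.edgeSet] (p : ℝ) (η : G.edgeSet → Bool) : ℝ :=
  ∏ e : G.edgeSet, bWeight p (η e)

lemma bernoulliWeight_nonneg (G : SimpleGraph V) [Fintype G.edgeSet] {p : ℝ} (hp₀ : 0 ≤ p)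
    (hp₁ : p ≤ 1) (η : G.edgeSet → Bool) : 0 ≤ bernoulliWeight G p η :=
  prod_nonneg fun e _ => by unfold bWeight; split <;> linarith

lemma bernoulliWeight_true_pos (G : SimpleGraph V) [Fintype G.edgeSet] {p : ℝ} (hp : 0 < p) :
    0 < bernoulliWeight G p (fun _ => true) :=
  prod_pos fun _ _ => hp

lemma esWeight_eq_bernoulliWeight_mul (G : SimpleGraph V) [Fintype G.edgeSet] (p : ℝ) {k : ℕ}
    (σ : V → Fin k) (η : G.edgeSet → Bool) [Decidable (ConstOnClusters G η σ)] :
    esWeight G p σ η = bernoulliWeight G p η * if ConstOnClusters G η σ then 1 else 0 := by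
  rw [esWeight, prod_mul_distrib, prod_ite_disagreeB_eq_ite_constOnClusters, bernoulliWeight]

end

section
omit [Fintype V]

/-- Edge by edge, `p · 1[agree] + (1 - p) = e^{-2β · 1[disagree]}` when `p = 1 - e^{-2β}`. -/
lemma sum_esWeight_eq_pottsWeight (G : SimpleGraph V) [Fintype G.edgeSet] (β : ℝ) {k : ℕ}
    (σ : V → Fin k) :
    ∑ η : G.edgeSet → Bool, esWeight G (1 - Real.exp (-2 * β)) σ η = pottsWeight G β σ := by
  have hedge : ∀ e : G.edgeSet, ∑ b : Bool, bWeight (1 - Real.exp (-2 * β)) b *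
        (if b = true ∧ disagreeB σ e.val = true then (0 : ℝ) else 1) =
      Real.exp (-2 * β * if disagreeB σ e.val then 1 else 0) := by
    intro e
    cases disagreeB σ e.val <;> simp [bWeight]
  rw [pottsWeight, mul_sum, Real.exp_sum, ← prod_congr rfl fun e _ => hedge e,
    prod_univ_sum, Fintype.piFinset_univ]
  rfl

open Classical in
lemma sum_pottsWeight_eq (G : SimpleGraph V) [Fintype G.edgeSet] (β : ℝ) {k : ℕ}
    (s : Finset (V → Fin k)) :
    ∑ σ ∈ s, pottsWeight G β σ = ∑ η : G.edgeSet → Bool,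
      bernoulliWeight G (1 - Real.exp (-2 * β)) η * #{σ ∈ s | ConstOnClusters G η σ} := by
  simp_rw [← sum_esWeight_eq_pottsWeight, esWeight_eq_bernoulliWeight_mul]
  rw [sum_comm]
  exact sum_congr rfl fun η _ => by rw [← mul_sum, sum_boole]

end

section
open Classical

variable (G : SimpleGraph V) (η : G.edgeSet → Bool) {q : ℕ} (x y : V)

lemma card_fiber_le_card_diag (i j k : Fin q) :
    #{σ : V → Fin q | ConstOnClusters G η σ ∧ σ x = j ∧ σ y = k} ≤
      #{σ : V → Fin q | ConstOnClusters G η σ ∧ σ x = i ∧ σ y = i} := by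
  set R := (openSub G η).Reachable
  refine card_le_card_of_injOn (fun σ v => if R x v ∨ R y v then i else σ v) ?_ ?_
  · intro σ hσ
    simp only [coe_filter, mem_univ, true_and, Set.mem_ofPred_eq] at hσ ⊢
    refine ⟨hσ.1.ite (fun _ _ _ => rfl) fun u v huv => ?_, by simp [R], by simp [R]⟩
    exact or_congr ⟨fun h => h.trans huv, fun h => h.trans huv.symm⟩
      ⟨fun h => h.trans huv, fun h => h.trans huv.symm⟩
  · intro σ₁ h₁ σ₂ h₂ heq
    simp only [coe_filter, mem_univ, true_and, Set.mem_ofPred_eq] at h₁ h₂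
    obtain ⟨hc₁, hx₁, hy₁⟩ := h₁
    obtain ⟨hc₂, hx₂, hy₂⟩ := h₂
    funext v
    by_cases hxv : R x v
    · rw [← hc₁ x v hxv, ← hc₂ x v hxv, hx₁, hx₂]
    by_cases hyv : R y v
    · rw [← hc₁ y v hyv, ← hc₂ y v hyv, hy₁, hy₂]
    simpa [hxv, hyv] using congrFun heq v

lemma card_constOnClusters_eq_sum_fiber :
    #{σ : V → Fin q | ConstOnClusters G η σ} =
      ∑ jk : Fin q × Fin q, #{σ : V → Fin q | ConstOnClusters G η σ ∧ σ x = jk.1 ∧ σ y = jk.2} := by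
  rw [card_eq_sum_card_fiberwise (f := fun σ => (σ x, σ y)) (t := univ) fun _ _ => mem_univ _]
  refine sum_congr rfl fun jk _ => ?_
  rw [filter_filter]
  simp only [Prod.ext_iff]

lemma card_constOnClusters_le (i : Fin q) :
    #{σ : V → Fin q | ConstOnClusters G η σ} ≤
      q ^ 2 * #{σ : V → Fin q | ConstOnClusters G η σ ∧ σ x = i ∧ σ y = i} := by
  rw [card_constOnClusters_eq_sum_fiber]
  calc _ ≤ ∑ _ : Fin q × Fin q, #{σ : V → Fin q | ConstOnClusters G η σ ∧ σ x = i ∧ σ y = i} :=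
        sum_le_sum fun jk _ => card_fiber_le_card_diag G η x y i jk.1 jk.2
    _ = _ := by simp [sq]

lemma card_constOnClusters_lt (hq : 2 ≤ q) (hxy : (openSub G η).Reachable x y) (i : Fin q) :
    #{σ : V → Fin q | ConstOnClusters G η σ} <
      q ^ 2 * #{σ : V → Fin q | ConstOnClusters G η σ ∧ σ x = i ∧ σ y = i} := by
  have : Nontrivial (Fin q) := Fin.nontrivial_iff_two_le.mpr hq
  obtain ⟨j, hji⟩ := exists_ne i
  have hempty : #{σ : V → Fin q | ConstOnClusters G η σ ∧ σ x = j ∧ σ y = i} = 0 :=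
    card_eq_zero.mpr <| filter_eq_empty_iff.mpr fun σ _ ⟨hc, hx, hy⟩ =>
      hji (hx ▸ hy ▸ hc x y hxy)
  have hdiag : 0 < #{σ : V → Fin q | ConstOnClusters G η σ ∧ σ x = i ∧ σ y = i} :=
    card_pos.mpr ⟨fun _ => i, mem_filter.mpr ⟨mem_univ _, fun _ _ _ => rfl, rfl, rfl⟩⟩
  rw [card_constOnClusters_eq_sum_fiber]
  calc _ < ∑ _ : Fin q × Fin q, #{σ : V → Fin q | ConstOnClusters G η σ ∧ σ x = i ∧ σ y = i} :=
        sum_lt_sum (fun jk _ => card_fiber_le_card_diag G η x y i jk.1 jk.2)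
          ⟨(j, i), mem_univ _, hempty ▸ hdiag⟩
    _ = _ := by simp [sq]

end

lemma sum_pottsWeight_lt_sq_mul (G : SimpleGraph V) [Fintype G.edgeSet] (hconn : G.Connected)
    {β : ℝ} (hβ : 0 < β) {q : ℕ} (hq : 2 ≤ q) (i : Fin q) (x y : V) :
    ∑ σ : V → Fin q, pottsWeight G β σ <
      (q : ℝ) ^ 2 * ∑ σ ∈ {σ : V → Fin q | σ x = i ∧ σ y = i}, pottsWeight G β σ := by
  classical
  have hp₀ : 0 < 1 - Real.exp (-2 * β) := sub_pos.mpr (Real.exp_lt_one_iff.mpr (by linarith))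
  have hp₁ : 1 - Real.exp (-2 * β) ≤ 1 := by linarith [Real.exp_pos (-2 * β)]
  have hdiag (η : G.edgeSet → Bool) :
      #{σ ∈ {σ : V → Fin q | σ x = i ∧ σ y = i} | ConstOnClusters G η σ} =
        #{σ : V → Fin q | ConstOnClusters G η σ ∧ σ x = i ∧ σ y = i} := by
    rw [filter_filter]
    simp only [and_comm]
  simp_rw [sum_pottsWeight_eq, mul_sum, hdiag, mul_left_comm _ (bernoulliWeight _ _ _)]
  refine sum_lt_sum (fun η _ => ?_) ⟨fun _ => true, mem_univ _, ?_⟩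
  · refine mul_le_mul_of_nonneg_left ?_ (bernoulliWeight_nonneg G hp₀.le hp₁ η)
    exact_mod_cast card_constOnClusters_le G η x y i
  · refine mul_lt_mul_of_pos_left ?_ (bernoulliWeight_true_pos G hp₀)
    have hxy : (openSub G fun _ => true).Reachable x y := by
      rw [openSub_true]
      exact hconn.preconnected x y
    exact_mod_cast card_constOnClusters_lt G _ x y hq hxy i

theorem potts_strict_positive_correlation_general (G : SimpleGraph V) [Fintype G.edgeSet]
    (hconn : G.Connected)
    (β : ℝ) (hβ : 0 < β) (q : ℕ) (hq : 2 ≤ q) (i : Fin q) (x y : V) :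
    (∑ σ ∈ univ.filter (fun σ : V → Fin q => σ x = i ∧ σ y = i), pottsMeasure G β σ) >
      1 / (q : ℝ) ^ 2 := by
  have : NeZero q := ⟨by omega⟩
  have hZ : 0 < ∑ σ : V → Fin q, pottsWeight G β σ :=
    sum_pos (fun _ _ => Real.exp_pos _) univ_nonempty
  simp only [pottsMeasure, ← sum_div]
  rw [gt_iff_lt, div_lt_div_iff₀ (by positivity) hZ, one_mul, mul_comm]
  exact sum_pottsWeight_lt_sq_mul G hconn hβ hq i x y

/-- On a finite connected graph with at least two vertices,
at inverse temperature `β > 0` the indicators of `{X(x)=i}` and `{X(y)=i}` are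
strictly positively correlated: the joint probability exceeds `1/q²`. -/
theorem potts_strict_positive_correlation (G : SimpleGraph V) [Fintype G.edgeSet]
    (hconn : G.Connected) (hcard : 1 < Fintype.card V)
    (β : ℝ) (hβ : 0 < β) (q : ℕ) (hq : 2 ≤ q) (i : Fin q) (x y : V) (hxy : x ≠ y) :
    (∑ σ ∈ univ.filter (fun σ : V → Fin q => σ x = i ∧ σ y = i), pottsMeasure G β σ) >
      1 / (q : ℝ) ^ 2 :=
  potts_strict_positive_correlation_general G hconn β hβ q hq i x y
end
end

section
/- Let G = (L, B) be a finite graph, let p ∈ [0,1], and let q ≥ 1. Then the random-cluster measure φ^G_{p,q} has positive correlations: for any two increasing functions f, g : {0,1}^B → ℝ, ∑_η φ^G_{p,q}(η) f(η) g(η) ≥ (∑_η φ^G_{p,q}(η) f(η)) · (∑_η φ^G_{p,q}(η) g(η)). -/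
open Finset

noncomputable section

variable {V : Type*}

variable [Fintype V] [DecidableEq V]

section FKGAux

open SimpleGraph

variable {W : Type*}

private lemma reach_sup_edge {G : SimpleGraph W} {s t x y : W}
    (h : (G ⊔ edge s t).Reachable x y) :
    G.Reachable x y ∨ (G.Reachable x s ∧ G.Reachable t y) ∨
      (G.Reachable x t ∧ G.Reachable s y) := by
  obtain ⟨w⟩ := h
  induction w with
  | nil => exact Or.inl (Reachable.refl _)
  | cons h p ih =>
    rw [sup_adj] at h
    rcases h with h | h
    · rcases ih with r | ⟨r1, r2⟩ | ⟨r1, r2⟩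
      · exact Or.inl (h.reachable.trans r)
      · exact Or.inr (Or.inl ⟨h.reachable.trans r1, r2⟩)
      · exact Or.inr (Or.inr ⟨h.reachable.trans r1, r2⟩)
    · rw [edge_adj] at h
      obtain ⟨(⟨rfl, rfl⟩ | ⟨rfl, rfl⟩), hne⟩ := h
      · rcases ih with r | ⟨r1, r2⟩ | ⟨r1, r2⟩
        · exact Or.inr (Or.inl ⟨Reachable.refl _, r⟩)
        · exact Or.inr (Or.inl ⟨Reachable.refl _, r2⟩)
        · exact Or.inl r2
      · rcases ih with r | ⟨r1, r2⟩ | ⟨r1, r2⟩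
        · exact Or.inr (Or.inr ⟨Reachable.refl _, r⟩)
        · exact Or.inl r2
        · exact Or.inr (Or.inr ⟨Reachable.refl _, r2⟩)

private lemma card_cc_congr {G G' : SimpleGraph W}
    (h : ∀ x y, G.Reachable x y ↔ G'.Reachable x y) :
    Nat.card G.ConnectedComponent = Nat.card G'.ConnectedComponent :=
  Nat.card_congr (Quot.congrRight h)

private lemma card_cc_sup_edge_reach {G : SimpleGraph W} {s t : W} (h : G.Reachable s t) :
    Nat.card (G ⊔ edge s t).ConnectedComponent = Nat.card G.ConnectedComponent := by
  refine card_cc_congr fun x y => ⟨fun hr => ?_, fun hr => hr.mono le_sup_left⟩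
  rcases reach_sup_edge hr with r | ⟨r1, r2⟩ | ⟨r1, r2⟩
  · exact r
  · exact (r1.trans h).trans r2
  · exact (r1.trans h.symm).trans r2

private lemma card_cc_sup_edge_not {G : SimpleGraph W} [Finite W] {s t : W}
    (hst : ¬ G.Reachable s t) :
    Nat.card (G ⊔ edge s t).ConnectedComponent + 1 = Nat.card G.ConnectedComponent := by
  classical
  have hne : s ≠ t := fun h => hst (h ▸ Reachable.refl s)
  set G' := G ⊔ edge s t with hG'
  have hadj : G'.Adj s t := Or.inr (by rw [edge_adj]; exact ⟨Or.inl ⟨rfl, rfl⟩, hne⟩)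
  let φ : G.ConnectedComponent → G'.ConnectedComponent :=
    ConnectedComponent.map (Hom.ofLE le_sup_left)
  have hφ : ∀ x, φ (G.connectedComponentMk x) = G'.connectedComponentMk x := fun x => rfl
  have key : ∀ x y, φ (G.connectedComponentMk x) = φ (G.connectedComponentMk y) ↔
      (G.Reachable x y ∨ (G.Reachable x s ∧ G.Reachable t y) ∨
        (G.Reachable x t ∧ G.Reachable s y)) := by
    intro x y
    rw [hφ, hφ, ConnectedComponent.eq]
    constructor
    · exact reach_sup_edge
    · rintro (r | ⟨r1, r2⟩ | ⟨r1, r2⟩)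
      · exact r.mono le_sup_left
      · exact ((r1.mono le_sup_left).trans hadj.reachable).trans (r2.mono le_sup_left)
      · exact ((r1.mono le_sup_left).trans hadj.symm.reachable).trans (r2.mono le_sup_left)
  set ct := G.connectedComponentMk t with hct
  let ψ : {c : G.ConnectedComponent // c ≠ ct} → G'.ConnectedComponent := fun c => φ c.val
  have hbij : Function.Bijective ψ := by
    constructor
    · rintro ⟨c, hc⟩ ⟨c', hc'⟩ hcc
      obtain ⟨x, rfl⟩ := c.exists_rep
      obtain ⟨y, rfl⟩ := c'.exists_rep
      simp only [ψ] at hcc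
      replace hcc := (key x y).mp hcc
      rcases hcc with r | ⟨r1, r2⟩ | ⟨r1, r2⟩
      · exact Subtype.ext (ConnectedComponent.sound r)
      · exact absurd (ConnectedComponent.sound r2.symm) hc'
      · exact absurd (ConnectedComponent.sound r1) hc
    · intro d
      obtain ⟨x, rfl⟩ := d.exists_rep
      by_cases hx : G.Reachable x t
      · refine ⟨⟨G.connectedComponentMk s, fun hc => hst ((SimpleGraph.ConnectedComponent.eq.mp hc))⟩, ?_⟩
        show φ (G.connectedComponentMk s) = _
        rw [hφ]
        exact ConnectedComponent.sound (hadj.reachable.trans ((hx.symm).mono le_sup_left))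
      · exact ⟨⟨G.connectedComponentMk x, fun hc => hx ((SimpleGraph.ConnectedComponent.eq.mp hc))⟩, rfl⟩
  haveI : Finite G.ConnectedComponent := Quot.finite _
  haveI := Fintype.ofFinite G.ConnectedComponent
  haveI : Finite G'.ConnectedComponent := Quot.finite _
  haveI := Fintype.ofFinite G'.ConnectedComponent
  have h1 : Nat.card G'.ConnectedComponent = Nat.card {c : G.ConnectedComponent // c ≠ ct} :=
    (Nat.card_congr (Equiv.ofBijective ψ hbij)).symm
  rw [h1, Nat.card_eq_fintype_card, Nat.card_eq_fintype_card]
  have h2 : Fintype.card {c : G.ConnectedComponent // c ≠ ct} =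
      Fintype.card G.ConnectedComponent - Fintype.card {c : G.ConnectedComponent // c = ct} :=
    Fintype.card_subtype_compl _
  have h3 : Fintype.card {c : G.ConnectedComponent // c = ct} = 1 := Fintype.card_subtype_eq ct
  have h4 : 0 < Fintype.card G.ConnectedComponent := Fintype.card_pos_iff.mpr ⟨ct⟩
  omega

end FKGAux
section FKGAux2

open SimpleGraph

variable {W : Type*}

private lemma bool_or_mono : ∀ a b c : Bool, a ≤ b → (a || c) ≤ (b || c) := by decide

private lemma bool_inf : ∀ a b : Bool, a ⊓ b = (a && b) := by decide

private lemma bool_sup : ∀ a b : Bool, a ⊔ b = (a || b) := by decide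

private lemma openSub_mono {G : SimpleGraph W} {ω ω' : G.edgeSet → Bool} (h : ω ≤ ω') :
    openSub G ω ≤ openSub G ω' := by
  refine SimpleGraph.fromEdgeSet_mono fun s hs => ?_
  obtain ⟨he, hη⟩ := hs
  refine ⟨he, ?_⟩
  have := h ⟨s, he⟩
  rw [hη] at this
  exact le_antisymm (Bool.le_true _) this

private lemma openSub_update [DecidableEq W] {G : SimpleGraph W} (ω : G.edgeSet → Bool) (e : G.edgeSet)
    {x y : W} (hxy : e.val = s(x, y)) :
    openSub G (Function.update ω e true) = openSub G ω ⊔ edge x y := by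
  have hedge : edge x y = fromEdgeSet {s(x, y)} := rfl
  rw [hedge]
  unfold openSub
  rw [← fromEdgeSet_union]
  congr 1
  ext z
  simp only [Set.mem_setOf_eq, Set.mem_union, Set.mem_singleton_iff]
  constructor
  · rintro ⟨hz, hηz⟩
    by_cases hze : z = e.val
    · exact Or.inr (hze.trans hxy)
    · left
      refine ⟨hz, ?_⟩
      rwa [Function.update_of_ne (fun hh => hze (congrArg Subtype.val hh)) _ _] at hηz
  · rintro (⟨hz, hηz⟩ | rfl)
    · by_cases hze : (⟨z, hz⟩ : G.edgeSet) = e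
      · refine ⟨hz, ?_⟩
        rw [hze, Function.update_self]
      · exact ⟨hz, by rwa [Function.update_of_ne hze _ _]⟩
    · refine ⟨hxy ▸ e.property, ?_⟩
      have he : (⟨s(x, y), hxy ▸ e.property⟩ : G.edgeSet) = e := Subtype.ext hxy.symm
      rw [he, Function.update_self]

private lemma key_edge {G : SimpleGraph W} [Fintype W] [DecidableEq W] {ω ω' : G.edgeSet → Bool}
    (h : ω ≤ ω') (e : G.edgeSet) :
    numClusters G ω' + numClusters G (Function.update ω e true)
      ≤ numClusters G ω + numClusters G (Function.update ω' e true) := by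
  obtain ⟨z, hz⟩ := e
  revert hz
  induction z using Sym2.ind with
  | _ x y =>
    intro hz
    have hxy : (⟨s(x, y), hz⟩ : G.edgeSet).val = s(x, y) := rfl
    unfold numClusters
    rw [openSub_update ω _ hxy, openSub_update ω' _ hxy]
    have hmono := openSub_mono (G := G) h
    by_cases hr : (openSub G ω).Reachable x y
    · rw [card_cc_sup_edge_reach hr, card_cc_sup_edge_reach (hr.mono hmono)]
      omega
    · by_cases hr' : (openSub G ω').Reachable x y
      · rw [card_cc_sup_edge_reach hr']
        have h2 := card_cc_sup_edge_not hr
        omega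
      · have h2 := card_cc_sup_edge_not hr
        have h3 := card_cc_sup_edge_not hr'
        omega

private lemma key_finset {G : SimpleGraph W} [Fintype W] [DecidableEq W]
    {ω ω' : G.edgeSet → Bool} (h : ω ≤ ω') (S : Finset G.edgeSet) :
    numClusters G ω' + numClusters G (fun e => ω e || decide (e ∈ S))
      ≤ numClusters G ω + numClusters G (fun e => ω' e || decide (e ∈ S)) := by
  induction S using Finset.induction_on with
  | empty =>
    have h1 : ∀ ν : G.edgeSet → Bool,
        (fun e => ν e || decide (e ∈ (∅ : Finset G.edgeSet))) = ν := by
      intro ν; funext e; simp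
    rw [h1, h1]
    omega
  | @insert a S ha ih =>
    have hupdate : ∀ ν : G.edgeSet → Bool,
        (fun e => ν e || decide (e ∈ insert a S)) =
          Function.update (fun e => ν e || decide (e ∈ S)) a true := by
      intro ν; funext e
      rcases eq_or_ne e a with rfl | hea
      · rw [Function.update_self]
        simp [Finset.mem_insert_self]
      · rw [Function.update_of_ne hea _ _]
        have hmem : (e ∈ insert a S) ↔ (e ∈ S) := by simp [hea]
        rw [decide_eq_decide.mpr hmem]
    rw [hupdate ω, hupdate ω']
    have hle : (fun e => ω e || decide (e ∈ S)) ≤ fun e => ω' e || decide (e ∈ S) :=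
      fun e => bool_or_mono _ _ _ (h e)
    have h1 := key_edge hle a
    omega

private lemma numClusters_supermodular {G : SimpleGraph W} [Fintype W] [DecidableEq W]
    (a b : G.edgeSet → Bool) :
    numClusters G a + numClusters G b ≤ numClusters G (a ⊓ b) + numClusters G (a ⊔ b) := by
  classical
  set S : Finset G.edgeSet := Finset.univ.filter (fun e => a e = true ∧ b e = false) with hSdef
  have hS : ∀ e, (e ∈ S) ↔ (a e = true ∧ b e = false) := by
    intro e; simp [hSdef]
  have h1 : (fun e => (a ⊓ b) e || decide (e ∈ S)) = a := by
    funext e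
    rw [Bool.eq_iff_iff]
    simp only [Bool.or_eq_true, decide_eq_true_eq, hS e, Pi.inf_apply, bool_inf,
      Bool.and_eq_true]
    cases hb : b e <;> simp
  have h2 : (fun e => b e || decide (e ∈ S)) = a ⊔ b := by
    funext e
    rw [Bool.eq_iff_iff]
    simp only [Bool.or_eq_true, decide_eq_true_eq, hS e, Pi.sup_apply, bool_sup]
    cases hb : b e <;> simp
  have := key_finset (inf_le_right : a ⊓ b ≤ b) S
  rw [h1, h2] at this
  omega

end FKGAux2
section FKGAux3

open SimpleGraph

variable {W : Type*} [Fintype W] [DecidableEq W]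

private lemma bWeight_nonneg {p : ℝ} (h0 : 0 ≤ p) (h1 : p ≤ 1) (b : Bool) :
    0 ≤ bWeight p b := by
  cases b <;> simp [bWeight] <;> linarith

private lemma rcWeight_nonneg {G : SimpleGraph W} [Fintype G.edgeSet] {p q : ℝ}
    (hp0 : 0 ≤ p) (hp1 : p ≤ 1) (hq : 1 ≤ q) (η : G.edgeSet → Bool) :
    0 ≤ rcWeight G p q η :=
  mul_nonneg (Finset.prod_nonneg fun e _ => bWeight_nonneg hp0 hp1 _)
    (pow_nonneg (by linarith) _)

private lemma bWeight_infsup (p : ℝ) (x y : Bool) :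
    bWeight p (x ⊓ y) * bWeight p (x ⊔ y) = bWeight p x * bWeight p y := by
  cases x <;> cases y <;> simp [bWeight, bool_inf, bool_sup] <;> ring

private lemma rcWeight_supermodular {G : SimpleGraph W} [Fintype G.edgeSet] {p q : ℝ}
    (hp0 : 0 ≤ p) (hp1 : p ≤ 1) (hq : 1 ≤ q) (a b : G.edgeSet → Bool) :
    rcWeight G p q a * rcWeight G p q b
      ≤ rcWeight G p q (a ⊓ b) * rcWeight G p q (a ⊔ b) := by
  have expand : ∀ u v : G.edgeSet → Bool,
      rcWeight G p q u * rcWeight G p q v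
        = (∏ e : G.edgeSet, bWeight p (u e) * bWeight p (v e))
            * q ^ (numClusters G u + numClusters G v) := by
    intro u v
    unfold rcWeight
    rw [Finset.prod_mul_distrib, pow_add]
    ring
  rw [expand, expand]
  have hB : (∏ e : G.edgeSet, bWeight p ((a ⊓ b) e) * bWeight p ((a ⊔ b) e))
      = ∏ e : G.edgeSet, bWeight p (a e) * bWeight p (b e) :=
    Finset.prod_congr rfl fun e _ => by rw [Pi.inf_apply, Pi.sup_apply, bWeight_infsup]
  rw [hB]
  exact mul_le_mul_of_nonneg_left
    (pow_le_pow_right₀ (by linarith) (numClusters_supermodular a b))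
    (Finset.prod_nonneg fun e _ =>
      mul_nonneg (bWeight_nonneg hp0 hp1 _) (bWeight_nonneg hp0 hp1 _))

private lemma rcZ_pos {G : SimpleGraph W} [Fintype G.edgeSet] {p q : ℝ}
    (hp0 : 0 ≤ p) (hp1 : p ≤ 1) (hq : 1 ≤ q) :
    0 < ∑ η : G.edgeSet → Bool, rcWeight G p q η := by
  rcases le_or_gt p (1 / 2) with hp | hp
  · refine Finset.sum_pos' (fun η _ => rcWeight_nonneg hp0 hp1 hq η)
      ⟨fun _ => false, Finset.mem_univ _, ?_⟩
    refine mul_pos (Finset.prod_pos fun e _ => ?_) (pow_pos (by linarith) _)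
    simp only [bWeight]
    norm_num
    linarith
  · refine Finset.sum_pos' (fun η _ => rcWeight_nonneg hp0 hp1 hq η)
      ⟨fun _ => true, Finset.mem_univ _, ?_⟩
    refine mul_pos (Finset.prod_pos fun e _ => ?_) (pow_pos (by linarith) _)
    simp only [bWeight]
    norm_num
    linarith

end FKGAux3

/-- FKG: for `q ≥ 1` the random-cluster measure has positive
correlations for increasing functions. -/
theorem rc_positive_correlations (G : SimpleGraph V) [Fintype G.edgeSet]
    (p : ℝ) (hp0 : 0 ≤ p) (hp1 : p ≤ 1) (q : ℝ) (hq : 1 ≤ q)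
    (f g : (G.edgeSet → Bool) → ℝ)
    (hf : ∀ η η' : G.edgeSet → Bool, (∀ e, η e ≤ η' e) → f η ≤ f η')
    (hg : ∀ η η' : G.edgeSet → Bool, (∀ e, η e ≤ η' e) → g η ≤ g η') :
    ∑ η : G.edgeSet → Bool, rcMeasure G p q η * (f η * g η) ≥
      (∑ η : G.edgeSet → Bool, rcMeasure G p q η * f η) *
        (∑ η : G.edgeSet → Bool, rcMeasure G p q η * g η) := by
  classical
  set μ : (G.edgeSet → Bool) → ℝ := rcMeasure G p q with hμdef
  have hZ : 0 < ∑ η' : G.edgeSet → Bool, rcWeight G p q η' := rcZ_pos hp0 hp1 hq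
  have hμ0 : ∀ η, 0 ≤ μ η := fun η =>
    div_nonneg (rcWeight_nonneg hp0 hp1 hq η) hZ.le
  have hμsum : ∑ η : G.edgeSet → Bool, μ η = 1 := by
    simp only [hμdef, rcMeasure]
    rw [← Finset.sum_div, div_self hZ.ne']
  have hμsuper : ∀ a b : G.edgeSet → Bool, μ a * μ b ≤ μ (a ⊓ b) * μ (a ⊔ b) := by
    intro a b
    simp only [hμdef, rcMeasure]
    rw [div_mul_div_comm, div_mul_div_comm]
    exact div_le_div_of_nonneg_right (rcWeight_supermodular hp0 hp1 hq a b)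
      (mul_pos hZ hZ).le
  set c1 : ℝ := f (fun _ => false) with hc1
  set c2 : ℝ := g (fun _ => false) with hc2
  set F : (G.edgeSet → Bool) → ℝ := fun η => f η - c1 with hF
  set Gg : (G.edgeSet → Bool) → ℝ := fun η => g η - c2 with hGg
  have hF0 : (0 : (G.edgeSet → Bool) → ℝ) ≤ F := fun η =>
    sub_nonneg.mpr (hf _ _ fun e => Bool.false_le _)
  have hG0 : (0 : (G.edgeSet → Bool) → ℝ) ≤ Gg := fun η =>
    sub_nonneg.mpr (hg _ _ fun e => Bool.false_le _)
  have hFmono : Monotone F := fun η η' h => sub_le_sub_right (hf _ _ fun e => h e) _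
  have hGmono : Monotone Gg := fun η η' h => sub_le_sub_right (hg _ _ fun e => h e) _
  have hμ0' : (0 : (G.edgeSet → Bool) → ℝ) ≤ μ := fun η => hμ0 η
  have hfkg := fkg F Gg μ hμ0' hF0 hG0 hFmono hGmono hμsuper
  have e1 : ∑ η : G.edgeSet → Bool, μ η * F η = (∑ η : G.edgeSet → Bool, μ η * f η) - c1 := by
    simp only [hF, mul_sub]
    rw [Finset.sum_sub_distrib, ← Finset.sum_mul, hμsum, one_mul]
  have e2 : ∑ η : G.edgeSet → Bool, μ η * Gg η = (∑ η : G.edgeSet → Bool, μ η * g η) - c2 := by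
    simp only [hGg, mul_sub]
    rw [Finset.sum_sub_distrib, ← Finset.sum_mul, hμsum, one_mul]
  have e3 : ∑ η : G.edgeSet → Bool, μ η * (F η * Gg η)
      = (∑ η : G.edgeSet → Bool, μ η * (f η * g η)) - c2 * (∑ η : G.edgeSet → Bool, μ η * f η)
        - c1 * (∑ η : G.edgeSet → Bool, μ η * g η) + c1 * c2 := by
    have hterm : ∀ η ∈ (Finset.univ : Finset (G.edgeSet → Bool)), μ η * (F η * Gg η) =
        μ η * (f η * g η) - c2 * (μ η * f η) - c1 * (μ η * g η) + (c1 * c2) * μ η := by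
      intro η _
      simp only [hF, hGg]
      ring
    rw [Finset.sum_congr rfl hterm]
    rw [Finset.sum_add_distrib, Finset.sum_sub_distrib, Finset.sum_sub_distrib,
      ← Finset.mul_sum, ← Finset.mul_sum, ← Finset.mul_sum, hμsum, mul_one]
  rw [e1, e2, e3, hμsum, one_mul] at hfkg
  nlinarith [hfkg]
end
end

section
/- Let G = (L, B) be a finite graph, let λ > 0, and let p = λ/(1+λ). Then the pushforward of the Widom–Rowlinson Gibbs measure under the map ξ ↦ |ξ| (where |ξ|(x) = |ξ(x)|) is the site-random-cluster measure with q = 2: for every η ∈ {0,1}^L, ψ^G_{p,2}(η) = ∑_{ξ ∈ {−1,0,+1}^L : |ξ| = η} μ^G_λ(ξ). -/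
open Finset

noncomputable section

open scoped Classical

variable {V : Type*}

/-- The number of open clusters of a site configuration `η`: the number of
connected components of the subgraph of `G` induced by the open vertices. -/
def siteClusters (G : SimpleGraph V) (η : V → Bool) : ℕ :=
  Nat.card (G.induce {x | η x = true}).ConnectedComponent

variable [Fintype V] [DecidableEq V]

/-- Unnormalized site-random-cluster weight. -/
def siteRCWeight (G : SimpleGraph V) (p q : ℝ) (η : V → Bool) : ℝ :=
  (∏ x : V, bWeight p (η x)) * q ^ siteClusters G η

/-- The site-random-cluster measure `ψ^G_{p,q}`. -/
def siteRCMeasure (G : SimpleGraph V) (p q : ℝ) (η : V → Bool) : ℝ :=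
  siteRCWeight G p q η / ∑ η' : V → Bool, siteRCWeight G p q η'

/-- Unnormalized Widom–Rowlinson weight with activity `lam`. -/
def wrWeight (G : SimpleGraph V) (lam : ℝ) (ξ : V → SignType) : ℝ :=
  (if ∀ x y : V, G.Adj x y → ξ x * ξ y ≠ -1 then 1 else 0) *
    ∏ x : V, lam ^ (if ξ x = 0 then 0 else 1)

/-- The Widom–Rowlinson Gibbs measure `μ^G_lam`. -/
def wrMeasure (G : SimpleGraph V) (lam : ℝ) (ξ : V → SignType) : ℝ :=
  wrWeight G lam ξ / ∑ ξ' : V → SignType, wrWeight G lam ξ'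

/-- The site configuration `|ξ|` of occupied vertices of `ξ`. -/
def absConfig (ξ : V → SignType) : V → Bool := fun x => decide (ξ x ≠ 0)

/-!
Fix the set of occupied sites `η`. A spin configuration `ξ` with `|ξ| = η` is allowed by the
Widom–Rowlinson constraint exactly when its sign is constant on every open cluster of `η`, so the
allowed `ξ` correspond to sign choices on clusters and there are `2 ^ k(η)` of them, each of weight
`λ ^ |η|`. With `p = λ / (1 + λ)` the site-percolation factor of `η` is `λ ^ |η| / (1 + λ) ^ |L|`,
so both unnormalized weights agree up to a constant and the normalized measures agree.
-/

open Finset SimpleGraph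

lemma SignType.eq_of_mul_ne_neg_one : ∀ {a b : SignType}, a ≠ 0 → b ≠ 0 → a * b ≠ -1 → a = b := by
  decide

lemma SignType.mul_self_ne_neg_one : ∀ a : SignType, a * a ≠ -1 := by
  decide

lemma div_sum_eq_sum_fiber_div {ι κ K : Type*} [Fintype ι] [Fintype κ] [DecidableEq κ]
    [Semifield K] (g : ι → κ) {u : ι → K} {v : κ → K} {c : K} (hc : c ≠ 0)
    (huv : ∀ k, v k = (∑ i with g i = k, u i) / c) (k : κ) :
    v k / ∑ k', v k' = ∑ i with g i = k, u i / ∑ i', u i' := by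
  have hsum : ∑ k', v k' = (∑ i, u i) / c := by
    simp only [huv, ← sum_div, sum_fiberwise]
  rw [hsum, huv, div_div_div_cancel_right₀ hc, sum_div]

section WidomRowlinson

variable {α : Type*} (G : SimpleGraph α)

def WRAdmissible (ξ : α → SignType) : Prop := ∀ x y, G.Adj x y → ξ x * ξ y ≠ -1

abbrev openGraph (η : α → Bool) : SimpleGraph {x | η x = true} := G.induce {x | η x = true}

variable {G}

lemma absConfig_eq_iff {ξ : α → SignType} {η : α → Bool} :
    absConfig ξ = η ↔ ∀ x, (η x = true ↔ ξ x ≠ 0) := by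
  simp only [funext_iff, absConfig]
  exact forall_congr' fun x => by cases η x <;> simp

lemma WRAdmissible.apply_eq_of_reachable {ξ : α → SignType} {η : α → Bool}
    (hξ : WRAdmissible G ξ) (hη : absConfig ξ = η) {u v : {x | η x = true}}
    (huv : (openGraph G η).Reachable u v) : ξ u = ξ v := by
  obtain ⟨w⟩ := huv
  induction w with
  | nil => rfl
  | @cons a b _ hadj _ ih =>
    exact (SignType.eq_of_mul_ne_neg_one ((absConfig_eq_iff.1 hη a).1 a.2)
      ((absConfig_eq_iff.1 hη b).1 b.2) (hξ _ _ hadj)).trans ih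


variable (G) in
def spinsOfClusterSigns (η : α → Bool) (s : (openGraph G η).ConnectedComponent → Bool) :
    α → SignType :=
  fun x => if hx : η x = true then
    (if s ((openGraph G η).connectedComponentMk ⟨x, hx⟩) then 1 else -1) else 0

lemma absConfig_spinsOfClusterSigns (η : α → Bool)
    (s : (openGraph G η).ConnectedComponent → Bool) :
    absConfig (spinsOfClusterSigns G η s) = η := by
  refine absConfig_eq_iff.2 fun x => ?_
  by_cases hx : η x = true
  · simp only [spinsOfClusterSigns, hx, dite_true]
    split <;> decide
  · simp [spinsOfClusterSigns, hx]

lemma wrAdmissible_spinsOfClusterSigns (η : α → Bool)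
    (s : (openGraph G η).ConnectedComponent → Bool) :
    WRAdmissible G (spinsOfClusterSigns G η s) := by
  intro x y hxy
  by_cases hx : η x = true
  · by_cases hy : η y = true
    · have hxy' : (openGraph G η).connectedComponentMk ⟨x, hx⟩ =
          (openGraph G η).connectedComponentMk ⟨y, hy⟩ :=
        ConnectedComponent.connectedComponentMk_eq_of_adj hxy
      simp only [spinsOfClusterSigns, hx, hy, dite_true, hxy']
      exact SignType.mul_self_ne_neg_one _
    · simp [spinsOfClusterSigns, hy]
  · simp [spinsOfClusterSigns, hx]

def clusterSigns {ξ : α → SignType} {η : α → Bool} (hξ : WRAdmissible G ξ)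
    (hη : absConfig ξ = η) : (openGraph G η).ConnectedComponent → Bool :=
  ConnectedComponent.lift (fun v => decide (ξ v = 1)) fun _ _ p _ => by
    rw [hξ.apply_eq_of_reachable hη p.reachable]

variable (G) in
def wrFiberEquivClusterSigns (η : α → Bool) :
    {ξ : α → SignType // absConfig ξ = η ∧ WRAdmissible G ξ} ≃
      ((openGraph G η).ConnectedComponent → Bool) where
  toFun ξ := clusterSigns ξ.2.2 ξ.2.1
  invFun s := ⟨spinsOfClusterSigns G η s, absConfig_spinsOfClusterSigns η s,
    wrAdmissible_spinsOfClusterSigns η s⟩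
  left_inv := by
    rintro ⟨ξ, hη, hξ⟩
    ext x
    by_cases hx : η x = true
    · have hξx : ξ x ≠ 0 := (absConfig_eq_iff.1 hη x).1 hx
      simp only [spinsOfClusterSigns, clusterSigns, hx, dite_true, ConnectedComponent.lift_mk]
      rcases SignType.trichotomy (ξ x) with h | h | h <;> simp [h] at hξx ⊢
    · have hξx : ξ x = 0 := not_ne_iff.1 fun h => hx ((absConfig_eq_iff.1 hη x).2 h)
      simp [spinsOfClusterSigns, hx, hξx]
  right_inv s := by
    funext c
    induction c using ConnectedComponent.ind with
    | h v =>
      have hv : η v = true := v.2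
      cases hs : s ((openGraph G η).connectedComponentMk v) <;>
        simp [clusterSigns, spinsOfClusterSigns, hv, hs]

lemma card_wrFiber [Finite α] (η : α → Bool) :
    Nat.card {ξ : α → SignType // absConfig ξ = η ∧ WRAdmissible G ξ} =
      2 ^ siteClusters G η := by
  rw [Nat.card_congr (wrFiberEquivClusterSigns G η), Nat.card_fun,
    Nat.card_eq_fintype_card (α := Bool), Fintype.card_bool]
  rfl

end WidomRowlinson

section Weights

variable {α : Type*} [Fintype α]

lemma wrWeight_of_absConfig_eq [DecidableEq α] (G : SimpleGraph α) (lam : ℝ)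
    {ξ : α → SignType} {η : α → Bool} (h : absConfig ξ = η) :
    wrWeight G lam ξ = if WRAdmissible G ξ then lam ^ #{x | η x = true} else 0 := by
  have hexp : ∀ x, (if ξ x = 0 then 0 else 1) = if η x = true then 1 else 0 := fun x => by
    simp only [absConfig_eq_iff.1 h x, ite_not]
  rw [wrWeight, prod_congr rfl fun x _ => congrArg (lam ^ ·) (hexp x), prod_pow_eq_pow_sum,
    ← card_filter, boole_mul]
  -- the two conditions agree but carry different `Decidable` instances
  exact if_congr Iff.rfl rfl rfl

lemma sum_wrWeight_fiber [DecidableEq α] (G : SimpleGraph α) (lam : ℝ) (η : α → Bool) :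
    ∑ ξ with absConfig ξ = η, wrWeight G lam ξ =
      2 ^ siteClusters G η * lam ^ #{x | η x = true} := by
  rw [sum_congr rfl fun ξ hξ => wrWeight_of_absConfig_eq G lam (mem_filter.1 hξ).2, sum_ite,
    sum_const_zero, add_zero, sum_const, nsmul_eq_mul, filter_filter, ← Fintype.card_subtype,
    ← Nat.card_eq_fintype_card, card_wrFiber]
  norm_cast

lemma bWeight_div_one_add (lam : ℝ) (hlam : 1 + lam ≠ 0) (b : Bool) :
    bWeight (lam / (1 + lam)) b = lam ^ (if b then 1 else 0) / (1 + lam) := by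
  cases b
  · simp only [bWeight, Bool.false_eq_true, ite_false, pow_zero]
    field_simp
    ring
  · simp [bWeight]

lemma prod_bWeight_div_one_add (lam : ℝ) (hlam : 1 + lam ≠ 0) (η : α → Bool) :
    ∏ x, bWeight (lam / (1 + lam)) (η x) =
      lam ^ #{x | η x = true} / (1 + lam) ^ Fintype.card α := by
  simp only [bWeight_div_one_add lam hlam, prod_div_distrib, prod_pow_eq_pow_sum, prod_const,
    card_univ, card_filter]

lemma siteRCWeight_eq_sum_wrWeight_fiber [DecidableEq α] (G : SimpleGraph α) {lam : ℝ}
    (hlam : 1 + lam ≠ 0) (η : α → Bool) :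
    siteRCWeight G (lam / (1 + lam)) 2 η =
      (∑ ξ with absConfig ξ = η, wrWeight G lam ξ) / (1 + lam) ^ Fintype.card α := by
  rw [siteRCWeight, prod_bWeight_div_one_add lam hlam, sum_wrWeight_fiber]
  ring

end Weights

/-- The pushforward of the Widom–Rowlinson measure under
`ξ ↦ |ξ|` is the site-random-cluster measure with `q = 2`. -/
theorem siteRC_from_wr (G : SimpleGraph V) (lam : ℝ) (hlam : 0 < lam)
    (p : ℝ) (hp : p = lam / (1 + lam)) (η : V → Bool) :
    siteRCMeasure G p 2 η =
      ∑ ξ ∈ univ.filter (fun ξ : V → SignType => absConfig ξ = η),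
        wrMeasure G lam ξ := by
  subst hp
  have hden : 1 + lam ≠ 0 := by positivity
  exact div_sum_eq_sum_fiber_div absConfig (pow_ne_zero _ hden)
    (siteRCWeight_eq_sum_wrWeight_fiber G hden) η
end
end
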